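/- arXiv:2007.14476 — 3 statements merged into one kernel-verified Lean document; each statement's English description precedes it below -/
import Mathlib

section
/- Let Γ be a real symmetric positive definite n×n matrix (the prior covariance), let F be a real m×n matrix (the forward operator), and let d₁,…,d_m ≥ 0 (the diagonal entries of the observation precision matrix, assumed diagonal, i.e., uncorrelated observation errors). For ζ ∈ ℝᵐ with ζᵢ ≥ 0 for all i, define H(ζ) = Γ⁻¹ + Fᵀ D(ζ) F, where D(ζ) is the diagonal m×m matrix with entries dᵢ ζᵢ. Then H(ζ) is symmetric positive definite for every such ζ, and the A-optimality criterion Ψ(ζ) = Tr(H(ζ)⁻¹) is a convex function on the nonnegative orthant {ζ ∈ ℝᵐ : ζᵢ ≥ 0 for all i}. -/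
/-! For positive definite `H`, `xᵀ H⁻¹ x = max_y (2 xᵀ y - yᵀ H y)`, the maximum being attained at
`y = H⁻¹ x`. As a supremum of functions affine in `H` it is convex on the positive definite cone, and
so is `Tr(H⁻¹)`, the sum of these forms over the standard basis. The posterior precision
`ζ ↦ Γ⁻¹ + Fᵀ D(ζ) F` is affine in `ζ` and maps the nonnegative orthant into that cone, and convexity
is preserved under composition with an affine map. -/

open Matrix

theorem ConvexOn.fun_sum {𝕜 E β ι : Type*} [Semiring 𝕜] [PartialOrder 𝕜] [AddCommMonoid E]
    [AddCommMonoid β] [PartialOrder β] [IsOrderedAddMonoid β] [SMul 𝕜 E] [Module 𝕜 β]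
    {s : Set E} (hs : Convex 𝕜 s) (t : Finset ι) {f : ι → E → β}
    (hf : ∀ i ∈ t, ConvexOn 𝕜 s (f i)) : ConvexOn 𝕜 s (fun x => ∑ i ∈ t, f i x) := by
  refine ⟨hs, fun x hx y hy a b ha hb hab => ?_⟩
  calc ∑ i ∈ t, f i (a • x + b • y) ≤ ∑ i ∈ t, (a • f i x + b • f i y) :=
        Finset.sum_le_sum fun i hi => (hf i hi).2 hx hy ha hb hab
    _ = a • ∑ i ∈ t, f i x + b • ∑ i ∈ t, f i y := by
        rw [Finset.sum_add_distrib, Finset.smul_sum, Finset.smul_sum]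

namespace Matrix

theorem convex_setOf_posDef {n : Type*} : Convex ℝ {H : Matrix n n ℝ | H.PosDef} := by
  intro A hA B hB a b ha hb hab
  rcases ha.eq_or_lt with rfl | ha
  · obtain rfl : b = 1 := by simpa using hab
    simpa using hB
  · exact (hA.smul ha).add_posSemidef (hB.posSemidef.smul hb)

section InverseQuadraticForm

variable {n : Type*} [Fintype n] [DecidableEq n]

theorem PosDef.mulVec_inv_mulVec {H : Matrix n n ℝ} (hH : H.PosDef) (x : n → ℝ) :
    H *ᵥ (H⁻¹ *ᵥ x) = x := by
  rw [mulVec_mulVec, mul_nonsing_inv _ ((isUnit_iff_isUnit_det H).mp hH.isUnit), one_mulVec]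

theorem PosDef.two_mul_dotProduct_sub_le_dotProduct_inv_mulVec {H : Matrix n n ℝ}
    (hH : H.PosDef) (x y : n → ℝ) : 2 * (x ⬝ᵥ y) - y ⬝ᵥ H *ᵥ y ≤ x ⬝ᵥ H⁻¹ *ᵥ x := by
  set z := H⁻¹ *ᵥ x
  have hz : H *ᵥ z = x := hH.mulVec_inv_mulVec x
  have hsq : 0 ≤ (y - z) ⬝ᵥ H *ᵥ (y - z) := by
    simpa using hH.posSemidef.dotProduct_mulVec_nonneg (y - z)
  have hHT : Hᵀ = H := by simpa using hH.isHermitian.eq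
  have hzy : z ⬝ᵥ H *ᵥ y = x ⬝ᵥ y := by
    rw [dotProduct_mulVec, ← mulVec_transpose, hHT, hz]
  rw [mulVec_sub, hz, sub_dotProduct, dotProduct_sub, dotProduct_sub, hzy,
    dotProduct_comm y x, dotProduct_comm z x] at hsq
  linarith

theorem PosDef.dotProduct_inv_mulVec_eq {H : Matrix n n ℝ} (hH : H.PosDef) (x : n → ℝ) :
    x ⬝ᵥ H⁻¹ *ᵥ x = 2 * (x ⬝ᵥ H⁻¹ *ᵥ x) - (H⁻¹ *ᵥ x) ⬝ᵥ H *ᵥ (H⁻¹ *ᵥ x) := by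
  rw [hH.mulVec_inv_mulVec, dotProduct_comm (H⁻¹ *ᵥ x) x]
  ring

theorem convexOn_dotProduct_inv_mulVec (x : n → ℝ) :
    ConvexOn ℝ {H : Matrix n n ℝ | H.PosDef} (fun H => x ⬝ᵥ H⁻¹ *ᵥ x) := by
  refine ⟨convex_setOf_posDef, fun A hA B hB a b ha hb hab => ?_⟩
  have hH : (a • A + b • B).PosDef := convex_setOf_posDef hA hB ha hb hab
  set y := (a • A + b • B)⁻¹ *ᵥ x
  calc x ⬝ᵥ (a • A + b • B)⁻¹ *ᵥ x
      = 2 * (x ⬝ᵥ y) - y ⬝ᵥ (a • A + b • B) *ᵥ y := hH.dotProduct_inv_mulVec_eq x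
    _ = a * (2 * (x ⬝ᵥ y) - y ⬝ᵥ A *ᵥ y) + b * (2 * (x ⬝ᵥ y) - y ⬝ᵥ B *ᵥ y) := by
        rw [add_mulVec, smul_mulVec, smul_mulVec, dotProduct_add, dotProduct_smul,
          dotProduct_smul, smul_eq_mul, smul_eq_mul]
        linear_combination (-2 * (x ⬝ᵥ y)) * hab
    _ ≤ a * (x ⬝ᵥ A⁻¹ *ᵥ x) + b * (x ⬝ᵥ B⁻¹ *ᵥ x) := by
        gcongr
        · exact PosDef.two_mul_dotProduct_sub_le_dotProduct_inv_mulVec hA x y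
        · exact PosDef.two_mul_dotProduct_sub_le_dotProduct_inv_mulVec hB x y

theorem trace_eq_sum_single_dotProduct_mulVec_single (M : Matrix n n ℝ) :
    M.trace = ∑ j, Pi.single j 1 ⬝ᵥ M *ᵥ Pi.single j 1 := by
  simp [trace, mulVec_single, single_dotProduct]

theorem convexOn_trace_inv : ConvexOn ℝ {H : Matrix n n ℝ | H.PosDef} (fun H => H⁻¹.trace) := by
  simp only [trace_eq_sum_single_dotProduct_mulVec_single]
  exact ConvexOn.fun_sum convex_setOf_posDef _ fun j _ => convexOn_dotProduct_inv_mulVec _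

end InverseQuadraticForm

section PosteriorPrecision

variable {m n : Type*} [Fintype m] [Fintype n] [DecidableEq m] [DecidableEq n]

def weightedGram (F : Matrix m n ℝ) (d : m → ℝ) : (m → ℝ) →ₗ[ℝ] Matrix n n ℝ where
  toFun ζ := Fᵀ * diagonal (fun i => d i * ζ i) * F
  map_add' ζ ξ := by
    simp only [Pi.add_apply, mul_add, ← diagonal_add, Matrix.mul_add, Matrix.add_mul]
  map_smul' c ζ := by
    have : diagonal (fun i => d i * (c • ζ) i) = c • diagonal (fun i => d i * ζ i) := by
      rw [← diagonal_smul]; congr 1; ext i; simp only [Pi.smul_apply, smul_eq_mul]; ring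
    rw [this, Matrix.mul_smul, Matrix.smul_mul, RingHom.id_apply]

noncomputable def posteriorPrecision (Γ : Matrix n n ℝ) (F : Matrix m n ℝ) (d : m → ℝ) :
    (m → ℝ) →ᵃ[ℝ] Matrix n n ℝ :=
  AffineMap.const ℝ (m → ℝ) Γ⁻¹ + (weightedGram F d).toAffineMap

theorem posteriorPrecision_apply (Γ : Matrix n n ℝ) (F : Matrix m n ℝ) (d ζ : m → ℝ) :
    posteriorPrecision Γ F d ζ = Γ⁻¹ + Fᵀ * diagonal (fun i => d i * ζ i) * F := rfl

theorem posDef_posteriorPrecision {Γ : Matrix n n ℝ} (hΓ : Γ.PosDef) (F : Matrix m n ℝ)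
    {d ζ : m → ℝ} (hd : 0 ≤ d) (hζ : 0 ≤ ζ) : (posteriorPrecision Γ F d ζ).PosDef := by
  rw [posteriorPrecision_apply]
  refine hΓ.inv.add_posSemidef ?_
  have := (PosSemidef.diagonal (mul_nonneg hd hζ)).conjTranspose_mul_mul_same F
  rwa [conjTranspose_eq_transpose_of_trivial] at this

end PosteriorPrecision

end Matrix

/-- With a symmetric positive definite prior covariance `Γ`, forward operator
`F`, and nonnegative observation precisions `d`, the weighted posterior
precision `H(ζ) = Γ⁻¹ + Fᵀ D(ζ) F` (with `D(ζ) = diagonal (dᵢ ζᵢ)`) is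
symmetric positive definite for every `ζ` in the nonnegative orthant, and the
A-optimality criterion `ζ ↦ Tr(H(ζ)⁻¹)` is convex on the nonnegative
orthant. -/
theorem stmt_7 (n m : ℕ) (Γ : Matrix (Fin n) (Fin n) ℝ) (hΓ : Γ.PosDef)
    (F : Matrix (Fin m) (Fin n) ℝ) (d : Fin m → ℝ) (hd : ∀ i, 0 ≤ d i) :
    (∀ ζ : Fin m → ℝ, (∀ i, 0 ≤ ζ i) →
        (Γ⁻¹ + Fᵀ * Matrix.diagonal (fun i => d i * ζ i) * F).PosDef) ∧
      ConvexOn ℝ {ζ : Fin m → ℝ | ∀ i, 0 ≤ ζ i}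
        (fun ζ => (Γ⁻¹ + Fᵀ * Matrix.diagonal (fun i => d i * ζ i) * F)⁻¹.trace) := by
  have hpos (ζ : Fin m → ℝ) (hζ : 0 ≤ ζ) : (posteriorPrecision Γ F d ζ).PosDef :=
    posDef_posteriorPrecision hΓ F hd hζ
  exact ⟨hpos, (convexOn_trace_inv.comp_affineMap (posteriorPrecision Γ F d)).subset
    (fun ζ hζ => hpos ζ hζ) (convex_Ici 0)⟩
end

section
/- Let H be a real symmetric positive definite n×n matrix, E a real symmetric n×n matrix, and P a real q×n matrix such that P H⁻¹ Pᵀ is invertible. Then the function t ↦ log det(P (H + t E)⁻¹ Pᵀ) is differentiable at t = 0 with derivative equal to −Tr((P H⁻¹ Pᵀ)⁻¹ P H⁻¹ E H⁻¹ Pᵀ). -/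
/-!
Jacobi's formula `d(det A) = tr(adj A · dA)` follows from the multilinearity of the determinant
in the rows together with Cramer's rule, and gives `d(log det A) = tr(A⁻¹ dA)`. Along
`A(t) = P (H + t E)⁻¹ Pᵀ` the derivative of the inverse is `d(X⁻¹) = -X⁻¹ dX X⁻¹`, so
`A'(0) = -P H⁻¹ E H⁻¹ Pᵀ`, and the formula follows.
-/

open Matrix

theorem HasDerivAt.ringInverse {𝕜 R : Type*} [NontriviallyNormedField 𝕜] [NormedRing R]
    [NormedAlgebra 𝕜 R] [CompleteSpace R] {f : 𝕜 → R} {f' : R} {t : 𝕜}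
    (hf : HasDerivAt f f' t) (ht : IsUnit (f t)) :
    HasDerivAt (fun s => Ring.inverse (f s))
      (-(Ring.inverse (f t) * f' * Ring.inverse (f t))) t := by
  obtain ⟨u, hu⟩ := ht
  have := (hu ▸ hasFDerivAt_ringInverse (𝕜 := 𝕜) u).comp_hasDerivAt t hf
  simpa [← hu, Function.comp_def] using this

/- `Matrix` carries no global norm: the statements below refer to its product topology, and each
proof picks a norm inducing it (the entrywise sup norm, or the `L∞` operator norm where a normed
ring is needed). -/
namespace Matrix

variable {𝕜 : Type*} [NontriviallyNormedField 𝕜] {m l : Type*} [Fintype m] [Fintype l] {t : 𝕜}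

theorem hasDerivAt_add_smul (A B : Matrix m l 𝕜) (t : 𝕜) :
    HasDerivAt (fun s => A + s • B) B t :=
  let _ : NormedAddCommGroup (Matrix m l 𝕜) := Matrix.normedAddCommGroup
  let _ : NormedSpace 𝕜 (Matrix m l 𝕜) := Matrix.normedSpace
  (((hasDerivAt_id t).smul_const B).const_add A).congr_deriv (one_smul 𝕜 B)

theorem _root_.HasDerivAt.matrix_const_mul_mul_const [CompleteSpace 𝕜] {f : 𝕜 → Matrix m m 𝕜}
    {f' : Matrix m m 𝕜} (hf : HasDerivAt f f' t) (P : Matrix l m 𝕜) (Q : Matrix m l 𝕜) :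
    HasDerivAt (fun s => P * f s * Q) (P * f' * Q) t :=
  let _ : NormedAddCommGroup (Matrix m m 𝕜) := Matrix.normedAddCommGroup
  let _ : NormedSpace 𝕜 (Matrix m m 𝕜) := Matrix.normedSpace
  let _ : NormedAddCommGroup (Matrix l l 𝕜) := Matrix.normedAddCommGroup
  let _ : NormedSpace 𝕜 (Matrix l l 𝕜) := Matrix.normedSpace
  (((mulRightLinearMap l 𝕜 Q).comp (mulLeftLinearMap m 𝕜 P)).toContinuousLinearMap
    |>.hasFDerivAt).comp_hasDerivAt t hf

variable [DecidableEq m]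

theorem _root_.HasDerivAt.matrix_inv [CompleteSpace 𝕜] {f : 𝕜 → Matrix m m 𝕜}
    {f' : Matrix m m 𝕜} (hf : HasDerivAt f f' t) (ht : IsUnit (f t)) :
    HasDerivAt (fun s => (f s)⁻¹) (-((f t)⁻¹ * f' * (f t)⁻¹)) t := by
  have := @HasDerivAt.ringInverse 𝕜 (Matrix m m 𝕜) _ Matrix.linftyOpNormedRing
    Matrix.linftyOpNormedAlgebra (inferInstanceAs (CompleteSpace (Matrix m m 𝕜))) f f' t hf ht
  simp only [nonsing_inv_eq_ringInverse]
  exact this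

def detRowContinuousMultilinear : ContinuousMultilinearMap 𝕜 (fun _ : m => m → 𝕜) 𝕜 where
  toMultilinearMap := (detRowAlternating (n := m) (R := 𝕜)).toMultilinearMap
  cont := continuous_id.matrix_det

theorem detRowContinuousMultilinear_linearDeriv (A Y : m → m → 𝕜) :
    (detRowContinuousMultilinear (𝕜 := 𝕜)).linearDeriv A Y
      = ((of A).adjugate * of Y).trace := by
  rw [ContinuousMultilinearMap.linearDeriv_apply]
  -- Cramer's rule for `Aᵀ`: replacing row `i` of `A` by `Y i` gives `(adj Aᵀ · Y i) i`.
  have hrow : ∀ i, detRowContinuousMultilinear (Function.update A i (Y i))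
      = ((of A)ᵀ.adjugate *ᵥ Y i) i := fun i => by
    rw [← cramer_eq_adjugate_mulVec, cramer_transpose_apply]
    rfl
  simp only [hrow, trace, diag, mul_apply, mulVec, dotProduct, ← adjugate_transpose,
    transpose_apply]
  exact Finset.sum_comm

theorem _root_.HasDerivAt.matrix_det {f : 𝕜 → Matrix m m 𝕜} {f' : Matrix m m 𝕜}
    (hf : HasDerivAt f f' t) :
    HasDerivAt (fun s => (f s).det) ((f t).adjugate * f').trace t := by
  have := (detRowContinuousMultilinear.hasFDerivAt (f t)).comp_hasDerivAt t hf
  rwa [detRowContinuousMultilinear_linearDeriv (f t) f'] at this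

end Matrix

theorem HasDerivAt.log_det {m : Type*} [Fintype m] [DecidableEq m]
    {f : ℝ → Matrix m m ℝ} {f' : Matrix m m ℝ} {t : ℝ} (hf : HasDerivAt f f' t)
    (ht : (f t).det ≠ 0) :
    HasDerivAt (fun s => Real.log (f s).det) ((f t)⁻¹ * f').trace t := by
  convert hf.matrix_det.log ht using 1
  rw [inv_def, Ring.inverse_eq_inv', smul_mul, trace_smul, smul_eq_mul, inv_mul_eq_div]

theorem stmt_12_general (n q : ℕ) (H E : Matrix (Fin n) (Fin n) ℝ)
    (hH : H.PosDef) (P : Matrix (Fin q) (Fin n) ℝ)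
    (hP : IsUnit (P * H⁻¹ * Pᵀ)) :
    HasDerivAt (fun t : ℝ => Real.log (P * (H + t • E)⁻¹ * Pᵀ).det)
      (-((P * H⁻¹ * Pᵀ)⁻¹ * P * H⁻¹ * E * H⁻¹ * Pᵀ).trace) 0 := by
  have hinv := (hasDerivAt_add_smul H E 0).matrix_inv (by simpa using hH.isUnit)
  have hdet : (P * H⁻¹ * Pᵀ).det ≠ 0 := ((isUnit_iff_isUnit_det _).1 hP).ne_zero
  have := (hinv.matrix_const_mul_mul_const P Pᵀ).log_det (by simpa using hdet)
  simpa [Matrix.mul_assoc] using this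

/-- For a symmetric positive definite `H`, a symmetric `E`, and a `q × n` matrix
`P` with `P H⁻¹ Pᵀ` invertible, the function `t ↦ log det(P (H + t E)⁻¹ Pᵀ)` is
differentiable at `t = 0` with derivative `−Tr((P H⁻¹ Pᵀ)⁻¹ P H⁻¹ E H⁻¹ Pᵀ)`. -/
theorem stmt_12 (n q : ℕ) (H E : Matrix (Fin n) (Fin n) ℝ)
    (hH : H.PosDef) (hE : E.IsSymm) (P : Matrix (Fin q) (Fin n) ℝ)
    (hP : IsUnit (P * H⁻¹ * Pᵀ)) :
    HasDerivAt (fun t : ℝ => Real.log (P * (H + t • E)⁻¹ * Pᵀ).det)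
      (-((P * H⁻¹ * Pᵀ)⁻¹ * P * H⁻¹ * E * H⁻¹ * Pᵀ).trace) 0 :=
  stmt_12_general n q H E hH P hP
end

section
/- Let Γ be a real symmetric positive definite n×n matrix, F a real m×n matrix, P a real q×n matrix, and let r₁,…,r_m > 0. For ζ ∈ ℝᵐ with ζᵢ ≥ 0 for all i, define H(ζ) = Γ⁻¹ + Fᵀ diag(ζ₁/r₁, …, ζ_m/r_m) F and Ψ(ζ) = Tr(P H(ζ)⁻¹ Pᵀ). Then for each j ∈ {1,…,m}, the partial derivative of Ψ with respect to ζⱼ at any ζ in the nonnegative orthant exists and equals −∑_{i=1}^{q} (s_i ⊙ s_i)ⱼ, where s_i = R^{−1/2} F H(ζ)⁻¹ Pᵀ e_i ∈ ℝᵐ, R^{−1/2} = diag(1/√r₁, …, 1/√r_m), e_i is the i-th standard basis vector of ℝ^{q}, and ⊙ denotes the entrywise product of vectors. -/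
/-!
Along the line `u ↦ Function.update ζ j u` the matrix `H` is affine with slope
`B = Fᵀ diag(eⱼ / r) F`, and `H ζ` is positive definite, hence invertible. Differentiating
the inverse gives `-(H ζ)⁻¹ B (H ζ)⁻¹`, and `X ↦ Tr (P X Pᵀ)` is linear, so
`∂Ψ/∂ζⱼ = -Tr (Gᵀ diag(eⱼ / r) G)` with `G = F (H ζ)⁻¹ Pᵀ` (using that `(H ζ)⁻¹` is symmetric).
This trace is `∑ᵢ G j i ² / r j`, and `(sᵢ)ⱼ = G j i / √(r j)`.
-/

open Matrix

-- Only the topology enters `HasDerivAt`; the entrywise sup norm is a convenient norm inducing it.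
attribute [local instance] Matrix.normedAddCommGroup Matrix.normedSpace

theorem HasDerivAt.ringInverse_s13 {𝕜 R : Type*} [NontriviallyNormedField 𝕜] [NormedRing R]
    [HasSummableGeomSeries R] [NormedAlgebra 𝕜 R] {A : 𝕜 → R} {A' : R} {t : 𝕜} {u : Rˣ}
    (hA : HasDerivAt A A' t) (hAt : ↑u = A t) :
    HasDerivAt (fun s => Ring.inverse (A s)) (-(↑u⁻¹ * A' * ↑u⁻¹)) t := by
  have h := (hasFDerivAt_ringInverse (𝕜 := 𝕜) u).comp_hasDerivAt_of_eq t hA hAt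
  simpa [Function.comp_def, ContinuousLinearMap.mulLeftRight_apply] using h

section Calculus

variable {𝕜 : Type*} [NontriviallyNormedField 𝕜] [CompleteSpace 𝕜] {t : 𝕜}
  {l m n p : Type*} [Fintype l] [Fintype m] [Fintype n] [Fintype p]

theorem HasDerivAt.matrix_mul_mul {X : 𝕜 → Matrix m n 𝕜} {X' : Matrix m n 𝕜}
    (hX : HasDerivAt X X' t) (P : Matrix l m 𝕜) (Q : Matrix n p 𝕜) :
    HasDerivAt (fun s => P * X s * Q) (P * X' * Q) t :=
  (mulRightLinearMap l 𝕜 Q ∘ₗ mulLeftLinearMap n 𝕜 P).toContinuousLinearMap.hasFDerivAt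
    |>.comp_hasDerivAt t hX

theorem HasDerivAt.matrix_trace {X : 𝕜 → Matrix m m 𝕜} {X' : Matrix m m 𝕜}
    (hX : HasDerivAt X X' t) : HasDerivAt (fun s => (X s).trace) X'.trace t :=
  (traceLinearMap m 𝕜 𝕜).toContinuousLinearMap.hasFDerivAt.comp_hasDerivAt t hX

theorem HasDerivAt.matrix_diagonal [DecidableEq m] {d : 𝕜 → m → 𝕜} {d' : m → 𝕜}
    (hd : HasDerivAt d d' t) : HasDerivAt (fun s => diagonal (d s)) (diagonal d') t :=
  (diagonalLinearMap m 𝕜 𝕜).toContinuousLinearMap.hasFDerivAt.comp_hasDerivAt t hd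

attribute [local instance] Matrix.linftyOpNormedRing Matrix.linftyOpNormedAlgebra in
theorem HasDerivAt.matrix_inv_s13 [DecidableEq m] {A : 𝕜 → Matrix m m 𝕜} {A' : Matrix m m 𝕜}
    (hA : HasDerivAt A A' t) (hAt : IsUnit (A t)) :
    HasDerivAt (fun s => (A s)⁻¹) (-((A t)⁻¹ * A' * (A t)⁻¹)) t := by
  obtain ⟨u, hu⟩ := hAt
  simp_rw [nonsing_inv_eq_ringInverse, ← hu, Ring.inverse_unit]
  -- The `linftyOp` uniformity is not syntactically the product one, so instance search
  -- does not find completeness on its own.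
  have : HasSummableGeomSeries (Matrix m m 𝕜) :=
    @instHasSummableGeomSeriesOfCompleteSpace _ _ (FiniteDimensional.complete 𝕜 _)
  exact hA.ringInverse_s13 hu

end Calculus

theorem Matrix.PosDef.add_transpose_mul_diagonal_mul {m n : Type*} [Fintype m] [Fintype n]
    [DecidableEq m] {A : Matrix n n ℝ} (hA : A.PosDef) (F : Matrix m n ℝ) {d : m → ℝ}
    (hd : 0 ≤ d) : (A + Fᵀ * diagonal d * F).PosDef :=
  hA.add_posSemidef (by simpa using (PosSemidef.diagonal hd).conjTranspose_mul_mul_same F)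

theorem Matrix.trace_transpose_mul_diagonal_mul {m q R : Type*} [Fintype m] [Fintype q]
    [DecidableEq m] [CommSemiring R] (G : Matrix m q R) (d : m → R) :
    (Gᵀ * diagonal d * G).trace = ∑ i, ∑ k, d k * G k i ^ 2 := by
  simp only [trace, diag, mul_apply (M := Gᵀ * diagonal d), mul_diagonal, transpose_apply]
  exact Finset.sum_congr rfl fun i _ => Finset.sum_congr rfl fun k _ => by ring

theorem Matrix.IsSymm.trace_mul_mul_transpose_mul_diagonal_mul {m n q R : Type*} [Fintype m]
    [Fintype n] [Fintype q] [DecidableEq m] [CommSemiring R] {K : Matrix n n R} (hK : K.IsSymm)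
    (P : Matrix q n R) (F : Matrix m n R) (d : m → R) :
    (P * (K * (Fᵀ * diagonal d * F) * K) * Pᵀ).trace = ∑ i, ∑ k, d k * (F * K * Pᵀ) k i ^ 2 := by
  rw [← trace_transpose_mul_diagonal_mul]
  simp only [transpose_mul, transpose_transpose, hK.eq, Matrix.mul_assoc]

/-- Gradient of the goal-oriented A-optimality criterion in the traditional OED
formulation with a diagonal observation error covariance `R = diag(r)` and
design weights `ζ`: with `H(ζ) = Γ⁻¹ + Fᵀ diag(ζᵢ/rᵢ) F` and
`Ψ(ζ) = Tr(P H(ζ)⁻¹ Pᵀ)`, the partial derivative `∂Ψ/∂ζⱼ` at any `ζ` in the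
nonnegative orthant exists and equals `−∑ᵢ (sᵢ ⊙ sᵢ)ⱼ`, where
`sᵢ = R^{-1/2} F H(ζ)⁻¹ Pᵀ eᵢ`. -/
theorem stmt_13 (n m q : ℕ) (Γ : Matrix (Fin n) (Fin n) ℝ) (hΓ : Γ.PosDef)
    (F : Matrix (Fin m) (Fin n) ℝ) (P : Matrix (Fin q) (Fin n) ℝ)
    (r : Fin m → ℝ) (hr : ∀ i, 0 < r i)
    (ζ : Fin m → ℝ) (hζ : ∀ i, 0 ≤ ζ i) (j : Fin m) :
    let H : (Fin m → ℝ) → Matrix (Fin n) (Fin n) ℝ := fun ξ =>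
      Γ⁻¹ + Fᵀ * Matrix.diagonal (fun i => ξ i / r i) * F
    let Ψ : (Fin m → ℝ) → ℝ := fun ξ => (P * (H ξ)⁻¹ * Pᵀ).trace
    let Rinvhalf : Matrix (Fin m) (Fin m) ℝ :=
      Matrix.diagonal fun i => 1 / Real.sqrt (r i)
    let s : Fin q → (Fin m → ℝ) := fun i =>
      (Rinvhalf * F * (H ζ)⁻¹ * Pᵀ).mulVec (Pi.single i 1)
    HasDerivAt (fun u : ℝ => Ψ (Function.update ζ j u))
      (-∑ i : Fin q, (s i * s i) j) (ζ j) := by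
  intro H Ψ Rinvhalf s
  have hHζ : (H ζ).PosDef :=
    hΓ.inv.add_transpose_mul_diagonal_mul F fun i => div_nonneg (hζ i) (hr i).le
  have hweights : HasDerivAt (fun u i => Function.update ζ j u i / r i)
      (fun i => (Pi.single j 1 : Fin m → ℝ) i / r i) (ζ j) :=
    hasDerivAt_pi.2 fun i => (hasDerivAt_pi.1 (hasDerivAt_update ζ j (ζ j)) i).div_const (r i)
  have hH : HasDerivAt (fun u => H (Function.update ζ j u))
      (Fᵀ * diagonal (fun i => (Pi.single j 1 : Fin m → ℝ) i / r i) * F) (ζ j) :=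
    (hweights.matrix_diagonal.matrix_mul_mul Fᵀ F).const_add Γ⁻¹
  have hunit : IsUnit (H (Function.update ζ j (ζ j))) := by simpa using hHζ.isUnit
  have hΨ := ((hH.matrix_inv_s13 hunit).matrix_mul_mul P Pᵀ).matrix_trace
  rw [Function.update_eq_self] at hΨ
  refine hΨ.congr_deriv ?_
  have hs : ∀ i, s i j = (F * (H ζ)⁻¹ * Pᵀ) j i / √(r j) := by
    simp [s, Rinvhalf, Matrix.mul_assoc, div_eq_inv_mul]
  rw [Matrix.mul_neg, Matrix.neg_mul, trace_neg,
    (isHermitian_iff_isSymm.1 hHζ.inv.isHermitian).trace_mul_mul_transpose_mul_diagonal_mul,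
    neg_inj]
  refine Finset.sum_congr rfl fun i _ => ?_
  rw [Pi.mul_apply, hs, ← sq, div_pow, Real.sq_sqrt (hr j).le]
  simp [Pi.single_apply, ite_mul, div_eq_inv_mul]
end
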